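/- arXiv:0806.3234 — 6 statements merged into one kernel-verified Lean document; each statement's English description precedes it below -/
import Mathlib

section
/- Let a : ℝ → ℝ be a measurable, essentially bounded, nonnegative function. The scalar ordinary differential equation x'(t) + a(t)x(t) = 0 is exponentially stable (i.e., there exist M > 0 and μ > 0 such that every solution with x(t₀) = x₀ satisfies |x(t)| ≤ M e^{-μ(t - t₀)} |x₀| for all t ≥ t₀ ≥ 0) if and only if there exists R > 0 such that liminf_{t → ∞} ∫_t^{t+R} a(s) ds > 0. -/
open MeasureTheory Filter Real

/-! If every solution decays like `M e^{-μ(t - t₀)}`, then on a window of length `R` with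
`M e^{-μR} ≤ e^{-1}` the coefficient has integral at least `1`. Conversely, if
`∫_s^{s+R} a ≥ ε` for all `s ≥ T`, chopping `[t₀, t]` into windows of length `R` gives
`∫_{t₀}^t a ≥ (ε/R)(t - t₀) - ε - (ε/R)T`: only the stretch before `T` and the last incomplete
window are lost, so the decay rate `ε/R` and the constant `e^{ε + εT/R}` do not depend on `t₀`. -/

lemma exists_pos_le_eventually_of_pos_liminf {u : ℝ → ℝ} (hu : IsBoundedUnder (· ≥ ·) atTop u)
    (h : 0 < liminf u atTop) : ∃ ε > 0, ∃ T ≥ 0, ∀ t ≥ T, ε ≤ u t := by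
  obtain ⟨T, hT⟩ := eventually_atTop.1 (eventually_lt_of_lt_liminf (half_lt_self h) hu)
  exact ⟨_, half_pos h, max T 0, le_max_right _ _, fun t ht => (hT t (le_of_max_le_left ht)).le⟩

section WindowIntegrals

variable {a : ℝ → ℝ} {ν : Measure ℝ} {T R ε : ℝ}

lemma nat_mul_le_integral_of_le_integral_window (hR : 0 ≤ R)
    (hint : ∀ s t, IntervalIntegrable a ν s t) (hwin : ∀ s, T ≤ s → ε ≤ ∫ x in s..s + R, a x ∂ν)
    (n : ℕ) {s : ℝ} (hs : T ≤ s) : n * ε ≤ ∫ x in s..s + n * R, a x ∂ν := by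
  induction n with
  | zero => simp
  | succ n ih =>
    have hstep := hwin (s + n * R) (by nlinarith)
    rw [← intervalIntegral.integral_add_adjacent_intervals (hint s (s + n * R)) (hint _ _)]
    push_cast
    rw [show s + (n + 1) * R = s + n * R + R by ring]
    linarith

lemma sub_le_integral_of_le_integral_window (hR : 0 < R) (hε : 0 ≤ ε) (ha : 0 ≤ a)
    (hint : ∀ s t, IntervalIntegrable a ν s t) (hwin : ∀ s, T ≤ s → ε ≤ ∫ x in s..s + R, a x ∂ν)
    {s t : ℝ} (hs : T ≤ s) (hst : s ≤ t) : ε / R * (t - s) - ε ≤ ∫ x in s..t, a x ∂ν := by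
  set n := ⌊(t - s) / R⌋₊
  have hn_lt : (t - s) / R - 1 < n := Nat.sub_one_lt_floor _
  have hnR : n * R ≤ t - s := (le_div_iff₀ hR).1 (Nat.floor_le (by positivity))
  calc ε / R * (t - s) - ε = ((t - s) / R - 1) * ε := by field_simp
    _ ≤ n * ε := by gcongr
    _ ≤ ∫ x in s..s + n * R, a x ∂ν :=
      nat_mul_le_integral_of_le_integral_window hR.le hint hwin n hs
    _ ≤ ∫ x in s..t, a x ∂ν :=
      intervalIntegral.integral_mono_interval le_rfl (by nlinarith) (by linarith)
        (ae_of_all _ ha) (hint s t)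

lemma linear_sub_le_integral_of_le_integral_window (hR : 0 < R) (hε : 0 ≤ ε) (hT : 0 ≤ T)
    (ha : 0 ≤ a) (hint : ∀ s t, IntervalIntegrable a ν s t)
    (hwin : ∀ s, T ≤ s → ε ≤ ∫ x in s..s + R, a x ∂ν) {s t : ℝ} (hs : 0 ≤ s) (hst : s ≤ t) :
    ε / R * (t - s) - (ε + ε / R * T) ≤ ∫ x in s..t, a x ∂ν := by
  have hrate : 0 ≤ ε / R := by positivity
  rcases le_or_gt (max s T) t with hst' | hts
  · have hlin := sub_le_integral_of_le_integral_window hR hε ha hint hwin (le_max_right s T) hst'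
    have hskip : 0 ≤ ∫ x in s..max s T, a x ∂ν :=
      intervalIntegral.integral_nonneg (le_max_left s T) fun x _ => ha x
    rw [← intervalIntegral.integral_add_adjacent_intervals (hint s (max s T)) (hint _ t)]
    linarith [mul_le_mul_of_nonneg_left (max_le_add_of_nonneg hs hT) hrate]
  · have hsmall : t - s ≤ T := by
      rcases lt_max_iff.1 hts with h | h <;> linarith
    have hnonneg := intervalIntegral.integral_nonneg (μ := ν) hst fun x _ => ha x
    linarith [mul_le_mul_of_nonneg_left hsmall hrate]

end WindowIntegrals

lemma isCoboundedUnder_ge_integral_window {a : ℝ → ℝ} {A R : ℝ} (hA : ∀ t, |a t| ≤ A) :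
    IsCoboundedUnder (· ≥ ·) atTop fun t => ∫ s in t..t + R, a s :=
  isBoundedUnder_of ⟨A * |R|, fun t =>
    (le_abs_self _).trans <| by
      simpa using intervalIntegral.norm_integral_le_of_norm_le_const (a := t) (b := t + R)
        (f := a) fun x _ => hA x⟩
    |>.isCoboundedUnder_ge

lemma one_le_integral_window_of_exp_decay {a : ℝ → ℝ} {M μ : ℝ} (hM : 0 < M) (hμ : 0 < μ)
    (hdecay : ∀ t₀ t, 0 ≤ t₀ → t₀ ≤ t → exp (-∫ s in t₀..t, a s) ≤ M * exp (-μ * (t - t₀)))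
    {t : ℝ} (ht : 0 ≤ t) : 1 ≤ ∫ s in t..t + (max (log M) 0 + 1) / μ, a s := by
  set R := (max (log M) 0 + 1) / μ
  have hμR : μ * R = max (log M) 0 + 1 := mul_div_cancel₀ _ hμ.ne'
  have h := hdecay t (t + R) ht (by simp only [le_add_iff_nonneg_right, R]; positivity)
  rw [← exp_log hM, ← exp_add, exp_le_exp] at h
  linarith [le_max_left (log M) 0]

/-- Lemma 6: the scalar ODE x' + a(t)x = 0 (with nonnegative, measurable,
essentially bounded coefficient) is exponentially stable iff there is R > 0
with liminf_{t→∞} ∫_t^{t+R} a > 0. Solutions are x(t) = x₀ exp(-∫_{t₀}^t a). -/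
theorem stmt0 (a : ℝ → ℝ) (hmeas : Measurable a) (hbd : ∃ A : ℝ, ∀ t, |a t| ≤ A)
    (hpos : ∀ t, 0 ≤ a t) :
    (∃ M > (0:ℝ), ∃ μ > (0:ℝ), ∀ t₀ t x₀ : ℝ, 0 ≤ t₀ → t₀ ≤ t →
        |x₀ * Real.exp (-∫ s in t₀..t, a s)| ≤ M * Real.exp (-μ * (t - t₀)) * |x₀|) ↔
      (∃ R > (0:ℝ), 0 < Filter.liminf (fun t => ∫ s in t..(t + R), a s) Filter.atTop) := by
  obtain ⟨A, hA⟩ := hbd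
  constructor
  · rintro ⟨M, hM, μ, hμ, hstab⟩
    have hdecay t₀ t (h₀ : 0 ≤ t₀) (ht : t₀ ≤ t) :
        exp (-∫ s in t₀..t, a s) ≤ M * exp (-μ * (t - t₀)) := by
      simpa using hstab t₀ t 1 h₀ ht
    refine ⟨(max (log M) 0 + 1) / μ, by positivity, one_pos.trans_le <|
      le_liminf_of_le (isCoboundedUnder_ge_integral_window hA) ?_⟩
    filter_upwards [eventually_ge_atTop 0] with t ht
    exact one_le_integral_window_of_exp_decay hM hμ hdecay ht
  · rintro ⟨R, hR, hlim⟩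
    have hint s t : IntervalIntegrable a volume s t :=
      intervalIntegrable_const.mono_fun' hmeas.aestronglyMeasurable (ae_of_all _ hA)
    have hbdd : IsBoundedUnder (· ≥ ·) atTop fun t => ∫ s in t..t + R, a s :=
      isBoundedUnder_of ⟨0, fun t =>
        intervalIntegral.integral_nonneg (by linarith) fun x _ => hpos x⟩
    obtain ⟨ε, hε, T, hT, hwin⟩ := exists_pos_le_eventually_of_pos_liminf hbdd hlim
    refine ⟨exp (ε + ε / R * T), exp_pos _, ε / R, by positivity, fun t₀ t x₀ h₀ ht => ?_⟩
    have hgrowth := linear_sub_le_integral_of_le_integral_window hR hε.le hT hpos hint hwin h₀ ht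
    rw [abs_mul, abs_of_pos (exp_pos _), mul_comm, ← exp_add]
    gcongr
    linarith
end

section
/- Let a : [0,∞) → ℝ be measurable and locally integrable, and suppose there exist R > 0 and α > 0 such that ∫_t^{t+R} a(τ) dτ ≥ α for all t ≥ 0, and a is bounded above by some constant A ≥ 0. Then for all t ≥ s ≥ 0, exp(-λ ∫_s^t a(τ) dτ) ≤ exp(λ R A) · exp(-(λ α / R)(t - s)) for every λ > 0. -/
open MeasureTheory Real

/-
Cover `[s, t]` by `n = ⌈(t - s) / R⌉` consecutive windows of length `R` starting at `s`.
Together they carry an integral of at least `n α ≥ α (t - s) / R`, and the overshoot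
`[t, s + n R]` has length at most `R`, so removing it costs at most `R A`. Hence
`∫_s^t a ≥ (α / R) (t - s) - R A`, and the estimate follows by monotonicity of `exp`.
-/

section SlidingWindow

variable {a : ℝ → ℝ} {R α A : ℝ}
  (hloc : ∀ s t : ℝ, IntervalIntegrable a volume s t)
  (hwin : ∀ t : ℝ, 0 ≤ t → α ≤ ∫ τ in t..(t + R), a τ)
include hloc hwin

theorem natCast_mul_le_integral_of_window_le (hR : 0 ≤ R) {s : ℝ} (hs : 0 ≤ s) :
    ∀ n : ℕ, n * α ≤ ∫ τ in s..(s + n * R), a τ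
  | 0 => by simp
  | n + 1 => by
    have hsplit := intervalIntegral.integral_add_adjacent_intervals
      (hloc s (s + n * R)) (hloc (s + n * R) (s + n * R + R))
    have hlast := hwin (s + n * R) (by positivity)
    have hprev := natCast_mul_le_integral_of_window_le hR hs n
    push_cast
    rw [show s + (n + 1) * R = s + n * R + R by ring, ← hsplit]
    linarith

theorem sub_le_integral_of_window_le (hR : 0 < R) (hα : 0 ≤ α) (hA : 0 ≤ A)
    (hbd : ∀ t : ℝ, a t ≤ A) {s t : ℝ} (hs : 0 ≤ s) (hst : s ≤ t) :
    α / R * (t - s) - R * A ≤ ∫ τ in s..t, a τ := by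
  set n := ⌈(t - s) / R⌉₊
  have hcover : t - s ≤ n * R := (div_le_iff₀ hR).1 (Nat.le_ceil _)
  have hovershoot : n * R < t - s + R := by
    have := Nat.ceil_lt_add_one (div_nonneg (sub_nonneg.2 hst) hR.le)
    rwa [div_add_one hR.ne', lt_div_iff₀ hR] at this
  have hwindows : α / R * (t - s) ≤ ∫ τ in s..(s + n * R), a τ :=
    calc α / R * (t - s) ≤ α / R * (n * R) := by gcongr
      _ = n * α := by field_simp
      _ ≤ _ := natCast_mul_le_integral_of_window_le hloc hwin hR.le hs n
  have htail : ∫ τ in t..(s + n * R), a τ ≤ R * A :=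
    calc ∫ τ in t..(s + n * R), a τ ≤ ∫ _ in t..(s + n * R), A :=
          intervalIntegral.integral_mono_on (by linarith) (hloc _ _)
            intervalIntegrable_const fun τ _ ↦ hbd τ
      _ = (s + n * R - t) * A := by simp
      _ ≤ R * A := by gcongr; linarith
  have hsplit := intervalIntegral.integral_add_adjacent_intervals
    (hloc s t) (hloc t (s + n * R))
  linarith

end SlidingWindow

theorem stmt3_general (a : ℝ → ℝ)
    (hloc : ∀ s t : ℝ, IntervalIntegrable a MeasureTheory.volume s t)
    (R α A : ℝ) (hR : 0 < R) (hα : 0 < α) (hA : 0 ≤ A)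
    (hwin : ∀ t : ℝ, 0 ≤ t → α ≤ ∫ τ in t..(t + R), a τ)
    (hbd : ∀ t : ℝ, a t ≤ A) :
    ∀ l : ℝ, 0 < l → ∀ s t : ℝ, 0 ≤ s → s ≤ t →
      Real.exp (-l * ∫ τ in s..t, a τ) ≤
        Real.exp (l * R * A) * Real.exp (-(l * α / R) * (t - s)) := by
  intro l hl s t hs hst
  have hlower := sub_le_integral_of_window_le hloc hwin hR hα.le hA hbd hs hst
  rw [← Real.exp_add, Real.exp_le_exp]
  have hscaled := mul_le_mul_of_nonneg_left hlower hl.le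
  rw [mul_div_assoc]
  linarith

/-- Quantitative step in Theorem 1: a uniform lower bound α on sliding-window
integrals ∫_t^{t+R} a together with an upper bound A on a converts
exp(-λ∫_s^t a) into a genuine exponential decay estimate. -/
theorem stmt3 (a : ℝ → ℝ) (hmeas : Measurable a)
    (hloc : ∀ s t : ℝ, IntervalIntegrable a MeasureTheory.volume s t)
    (R α A : ℝ) (hR : 0 < R) (hα : 0 < α) (hA : 0 ≤ A)
    (hwin : ∀ t : ℝ, 0 ≤ t → α ≤ ∫ τ in t..(t + R), a τ)
    (hbd : ∀ t : ℝ, a t ≤ A) :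
    ∀ l : ℝ, 0 < l → ∀ s t : ℝ, 0 ≤ s → s ≤ t →
      Real.exp (-l * ∫ τ in s..t, a τ) ≤
        Real.exp (l * R * A) * Real.exp (-(l * α / R) * (t - s)) :=
  stmt3_general a hloc R α A hR hα hA hwin hbd
end

section
/- Suppose ∫_0^∞ Σ_{k=1}^m |a_k(s)| ds < ∞, where a_k are measurable essentially bounded functions and h_k(t) ≤ t are measurable delays. Then every solution of x'(t) + Σ_{k=1}^m a_k(t) x(h_k(t)) = 0 with bounded Borel measurable initial function φ on (-∞, t₀) and initial value x(t₀) = x₀ is bounded on [t₀, ∞); specifically, |x(t)| ≤ exp(∫_{t₀}^∞ Σ_k |a_k(s)| ds) · (|x₀| + ‖φ‖_∞ · ∫_{t₀}^∞ Σ_k |a_k(s)| ds). -/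
/-! Write `g = ∑_k |a_k|` and `G(t) = ∫_{t₀}^t g`. Picard iteration of the integral equation on
`[t₀, T]` gives, for every `n`, `|x t| ≤ B ∑_{j<n} G(t)^j / j! + M G(t)^n / n!`, where
`B = |x₀| + C G(T)` and `M` is an a priori bound for `|x|` on `[t₀, T]`. This bound is
nondecreasing in `t`, so it also controls the delayed values `x (h_k s)`, `h_k s ≤ s`; letting
`n → ∞` gives `|x t| ≤ B exp G(t)`. The identity `∫_{t₀}^t g G^j = G(t)^(j+1) / (j+1)` behind the
iteration is the fundamental theorem of calculus for the absolutely continuous function `G^(j+1)`.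

The a priori bound comes from the integrability of the right-hand side on `[t₀, T]`; without it
the interval integral is `0` by convention and `x T = x₀`. -/

open MeasureTheory Real Finset Set Filter Topology

theorem AbsolutelyContinuousOnInterval.fun_pow {f : ℝ → ℝ} {a b : ℝ}
    (hf : AbsolutelyContinuousOnInterval f a b) (n : ℕ) :
    AbsolutelyContinuousOnInterval (fun x => f x ^ n) a b := by
  induction n with
  | zero =>
    simpa using (LipschitzWith.const (1 : ℝ)).lipschitzOnWith.absolutelyContinuousOnInterval
  | succ n ih => simpa only [pow_succ] using ih.fun_mul hf

theorem integral_mul_pow_primitive {g : ℝ → ℝ} {a b : ℝ}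
    (hg : IntervalIntegrable g volume a b) (n : ℕ) :
    ∫ s in a..b, g s * (∫ r in a..s, g r) ^ n = (∫ r in a..b, g r) ^ (n + 1) / (n + 1) := by
  set G : ℝ → ℝ := fun s => ∫ r in a..s, g r
  have hG : AbsolutelyContinuousOnInterval G a b :=
    hg.absolutelyContinuousOnInterval_intervalIntegral left_mem_uIcc
  have hderiv : ∀ᵐ s, s ∈ uIoc a b →
      g s * G s ^ n = deriv (fun s => G s ^ (n + 1)) s / (n + 1) := by
    filter_upwards [hg.ae_hasDerivAt_integral] with s hs hsab
    have hGs : HasDerivAt G (g s) s := hs (uIoc_subset_uIcc hsab) a left_mem_uIcc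
    rw [(hGs.fun_pow (n + 1)).deriv]
    field_simp
    push_cast
    ring
  rw [intervalIntegral.integral_congr_ae hderiv, intervalIntegral.integral_div,
    (hG.fun_pow (n + 1)).integral_deriv_eq_sub]
  simp [G]

theorem IntervalIntegrable.mul_comp_primitive {f g : ℝ → ℝ} {a b : ℝ}
    (hg : IntervalIntegrable g volume a b) (hf : Continuous f) :
    IntervalIntegrable (fun s => g s * f (∫ r in a..s, g r)) volume a b :=
  hg.mul_continuousOn
    (hf.comp_continuousOn (intervalIntegral.continuousOn_primitive_interval' hg left_mem_uIcc))

section PicardBound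

open scoped Nat

noncomputable def picardBound (B M : ℝ) (n : ℕ) (y : ℝ) : ℝ :=
  B * ∑ j ∈ range n, y ^ j / j ! + M * (y ^ n / n !)

variable {B M : ℝ}

theorem continuous_picardBound (B M : ℝ) (n : ℕ) : Continuous (picardBound B M n) := by
  unfold picardBound; fun_prop

theorem picardBound_nonneg (hB : 0 ≤ B) (hM : 0 ≤ M) (n : ℕ) {y : ℝ} (hy : 0 ≤ y) :
    0 ≤ picardBound B M n y := by
  unfold picardBound; positivity

theorem picardBound_monotoneOn (hB : 0 ≤ B) (hM : 0 ≤ M) (n : ℕ) :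
    MonotoneOn (picardBound B M n) (Ici 0) := by
  intro y hy z _ hyz
  unfold picardBound
  gcongr with j

theorem picardBound_le (hB : 0 ≤ B) (n : ℕ) {y : ℝ} (hy : 0 ≤ y) :
    picardBound B M n y ≤ B * exp y + M * (y ^ n / n !) := by
  unfold picardBound
  gcongr
  exact sum_le_exp_of_nonneg hy n

theorem picardBound_succ (B M : ℝ) (n : ℕ) (y : ℝ) :
    picardBound B M (n + 1) y =
      B + (∑ j ∈ range n, B * (y ^ (j + 1) / (j + 1) / j !) +
        M * (y ^ (n + 1) / (n + 1) / n !)) := by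
  have hfact (j : ℕ) : y ^ (j + 1) / ((j + 1)! : ℝ) = y ^ (j + 1) / (j + 1) / j ! := by
    rw [Nat.factorial_succ]; push_cast; field_simp
  simp only [picardBound, sum_range_succ', hfact, pow_zero, Nat.factorial_zero, Nat.cast_one,
    div_one, mul_add, mul_sum]
  ring

theorem add_integral_mul_picardBound {g : ℝ → ℝ} {a b : ℝ}
    (hg : IntervalIntegrable g volume a b) (B M : ℝ) (n : ℕ) :
    B + ∫ s in a..b, g s * picardBound B M n (∫ r in a..s, g r) =
      picardBound B M (n + 1) (∫ r in a..b, g r) := by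
  have hterm (c : ℝ) (j : ℕ) :
      IntervalIntegrable (fun s => c * (g s * (∫ r in a..s, g r) ^ j / j !)) volume a b :=
    ((hg.mul_comp_primitive (continuous_pow j)).div_const _).const_mul c
  have hexpand : ∀ s, g s * picardBound B M n (∫ r in a..s, g r) =
      ∑ j ∈ range n, B * (g s * (∫ r in a..s, g r) ^ j / j !) +
        M * (g s * (∫ r in a..s, g r) ^ n / n !) := fun s => by
    simp only [picardBound, mul_add, mul_sum]
    congr 1
    · exact sum_congr rfl fun j _ => by ring
    · ring
  have hsum : IntervalIntegrable
      (fun s => ∑ j ∈ range n, B * (g s * (∫ r in a..s, g r) ^ j / j !)) volume a b := by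
    simpa only [Finset.sum_fn] using IntervalIntegrable.sum (range n) fun j _ => hterm B j
  simp only [hexpand]
  rw [intervalIntegral.integral_add hsum (hterm M n),
    intervalIntegral.integral_finsetSum fun j _ => hterm B j, picardBound_succ]
  simp only [intervalIntegral.integral_const_mul, intervalIntegral.integral_div,
    integral_mul_pow_primitive hg]

end PicardBound

theorem monotoneOn_primitive_of_nonneg {g : ℝ → ℝ} {a b : ℝ}
    (hg : IntervalIntegrable g volume a b) (hg0 : ∀ s, 0 ≤ g s) :
    MonotoneOn (fun t => ∫ s in a..t, g s) (Icc a b) :=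
  fun _ hr t ht hrt => intervalIntegral.integral_mono_interval le_rfl hr.1 hrt (ae_of_all _ hg0)
    (hg.mono_set (uIcc_subset_uIcc_left (by rwa [uIcc_of_le (ht.1.trans ht.2)])))

theorem abs_le_add_of_le_of_monotoneOn {x w : ℝ → ℝ} {t₀ T C : ℝ} (hC : 0 ≤ C)
    (hxC : ∀ t < t₀, |x t| ≤ C) (hw : MonotoneOn w (Icc t₀ T)) (hw0 : ∀ s ∈ Icc t₀ T, 0 ≤ w s)
    (hxw : ∀ t ∈ Icc t₀ T, |x t| ≤ w t) {r s : ℝ} (hrs : r ≤ s) (hs : s ∈ Icc t₀ T) :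
    |x r| ≤ C + w s := by
  by_cases hr : r < t₀
  · exact (hxC r hr).trans (le_add_of_nonneg_right (hw0 s hs))
  · have hr' : r ∈ Icc t₀ T := ⟨not_lt.mp hr, hrs.trans hs.2⟩
    exact ((hxw r hr').trans (hw hr' hs hrs)).trans (le_add_of_nonneg_left hC)

theorem abs_le_abs_add_integral_abs_of_eq_sub_integral {F x : ℝ → ℝ} {t₀ T x₀ : ℝ}
    (hF : IntervalIntegrable F volume t₀ T)
    (hxeq : ∀ t ∈ Icc t₀ T, x t = x₀ - ∫ s in t₀..t, F s) :
    ∀ t ∈ Icc t₀ T, |x t| ≤ |x₀| + ∫ s in t₀..T, |F s| := by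
  intro t ht
  calc |x t| ≤ |x₀| + |∫ s in t₀..t, F s| := hxeq t ht ▸ abs_sub _ _
    _ ≤ |x₀| + ∫ s in t₀..t, |F s| := by
      gcongr; exact intervalIntegral.abs_integral_le_integral_abs ht.1
    _ ≤ |x₀| + ∫ s in t₀..T, |F s| := by
      gcongr
      exact intervalIntegral.integral_mono_interval le_rfl ht.1 ht.2
        (ae_of_all _ fun s => abs_nonneg _) hF.abs

theorem intervalIntegral_le_setIntegral_Ici {g : ℝ → ℝ} {a b : ℝ} (hab : a ≤ b)
    (hg : IntegrableOn g (Ici a)) (hg0 : ∀ s, 0 ≤ g s) :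
    ∫ s in a..b, g s ≤ ∫ s in Ici a, g s := by
  rw [intervalIntegral.integral_of_le hab]
  exact setIntegral_mono_set hg (ae_of_all _ hg0)
    (Set.Ioc_subset_Icc_self.trans Set.Icc_subset_Ici_self).eventuallyLE

section DelayEquation

open scoped Nat

variable {m : ℕ} {a h : Fin m → ℝ → ℝ} {x : ℝ → ℝ} {t₀ T x₀ C B : ℝ}

theorem abs_le_abs_add_integral_of_abs_delay_le {w : ℝ → ℝ} {t : ℝ} (ht : t₀ ≤ t)
    (hxt : x t = x₀ - ∫ s in t₀..t, ∑ k, a k s * x (h k s))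
    (hw : ∀ s ∈ Ioc t₀ t, ∀ k, |x (h k s)| ≤ w s)
    (hgw : IntervalIntegrable (fun s => (∑ k, |a k s|) * w s) volume t₀ t) :
    |x t| ≤ |x₀| + ∫ s in t₀..t, (∑ k, |a k s|) * w s := by
  have hF : ‖∫ s in t₀..t, ∑ k, a k s * x (h k s)‖ ≤ ∫ s in t₀..t, (∑ k, |a k s|) * w s := by
    refine intervalIntegral.norm_integral_le_of_norm_le ht (ae_of_all _ fun s hs => ?_) hgw
    calc ‖∑ k, a k s * x (h k s)‖ ≤ ∑ k, |a k s| * |x (h k s)| := by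
          simpa only [Real.norm_eq_abs, abs_mul] using
            abs_sum_le_sum_abs (fun k => a k s * x (h k s)) univ
      _ ≤ ∑ k, |a k s| * w s := by gcongr with k; exact hw s hs k
      _ = (∑ k, |a k s|) * w s := (sum_mul _ _ _).symm
  rw [hxt]
  exact (abs_sub _ _).trans (by rw [← Real.norm_eq_abs (∫ _ in _.._, _)]; gcongr)

theorem abs_le_picardBound_of_eq_sub_integral
    (hg : IntervalIntegrable (fun s => ∑ k, |a k s|) volume t₀ T)
    (hht : ∀ k t, h k t ≤ t) (hC : 0 ≤ C) (hxC : ∀ t < t₀, |x t| ≤ C)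
    (hxeq : ∀ t ∈ Icc t₀ T, x t = x₀ - ∫ s in t₀..t, ∑ k, a k s * x (h k s))
    (hB : |x₀| + C * ∫ s in t₀..T, ∑ k, |a k s| ≤ B)
    {M : ℝ} (hM : 0 ≤ M) (hxM : ∀ t ∈ Icc t₀ T, |x t| ≤ M) (n : ℕ) :
    ∀ t ∈ Icc t₀ T, |x t| ≤ picardBound B M n (∫ s in t₀..t, ∑ k, |a k s|) := by
  set g : ℝ → ℝ := fun s => ∑ k, |a k s|
  have hg0 : ∀ s, 0 ≤ g s := fun s => sum_nonneg fun k _ => abs_nonneg _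
  have hgsub : ∀ t ∈ Icc t₀ T, IntervalIntegrable g volume t₀ t := fun t ht =>
    hg.mono_set (uIcc_subset_uIcc_left (by rwa [uIcc_of_le (ht.1.trans ht.2)]))
  have hG0 : ∀ t, t₀ ≤ t → 0 ≤ ∫ s in t₀..t, g s := fun t ht =>
    intervalIntegral.integral_nonneg ht fun s _ => hg0 s
  have hGmono := monotoneOn_primitive_of_nonneg hg hg0
  induction n with
  | zero => intro t ht; simpa [picardBound] using hxM t ht
  | succ n ih =>
  intro t ht
  have hB0 : 0 ≤ B := le_trans (by have := hG0 T (ht.1.trans ht.2); positivity) hB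
  set P : ℝ → ℝ := fun s => picardBound B M n (∫ r in t₀..s, g r)
  have hPmono : MonotoneOn P (Icc t₀ T) :=
    (picardBound_monotoneOn hB0 hM n).comp hGmono fun s hs => hG0 s hs.1
  have hP0 : ∀ s ∈ Icc t₀ T, 0 ≤ P s := fun s hs => picardBound_nonneg hB0 hM n (hG0 s hs.1)
  have hgP : IntervalIntegrable (fun s => g s * P s) volume t₀ t :=
    (hgsub t ht).mul_comp_primitive (continuous_picardBound B M n)
  have hsplit : ∫ s in t₀..t, g s * (C + P s) =
      C * (∫ s in t₀..t, g s) + ∫ s in t₀..t, g s * P s := by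
    simp only [mul_add]
    rw [intervalIntegral.integral_add ((hgsub t ht).mul_const C) hgP,
      intervalIntegral.integral_mul_const, mul_comm]
  have hCG : |x₀| + C * (∫ s in t₀..t, g s) ≤ B :=
    le_trans (by gcongr; exact hGmono ht ⟨ht.1.trans ht.2, le_rfl⟩ ht.2) hB
  calc |x t| ≤ |x₀| + ∫ s in t₀..t, g s * (C + P s) :=
        abs_le_abs_add_integral_of_abs_delay_le ht.1 (hxeq t ht)
          (fun s hs k => abs_le_add_of_le_of_monotoneOn hC hxC hPmono hP0 ih (hht k s)
            ⟨hs.1.le, hs.2.trans ht.2⟩)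
          (((hgsub t ht).mul_const C).add hgP |>.congr fun s _ => by ring)
    _ ≤ B + ∫ s in t₀..t, g s * P s := by linarith
    _ = picardBound B M (n + 1) (∫ s in t₀..t, g s) :=
      add_integral_mul_picardBound (hgsub t ht) B M n

theorem abs_le_mul_exp_of_eq_sub_integral
    (hg : IntervalIntegrable (fun s => ∑ k, |a k s|) volume t₀ T)
    (hF : IntervalIntegrable (fun s => ∑ k, a k s * x (h k s)) volume t₀ T)
    (hht : ∀ k t, h k t ≤ t) (hC : 0 ≤ C) (hxC : ∀ t < t₀, |x t| ≤ C)
    (hxeq : ∀ t ∈ Icc t₀ T, x t = x₀ - ∫ s in t₀..t, ∑ k, a k s * x (h k s))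
    (hB : |x₀| + C * ∫ s in t₀..T, ∑ k, |a k s| ≤ B) :
    ∀ t ∈ Icc t₀ T, |x t| ≤ B * exp (∫ s in t₀..t, ∑ k, |a k s|) := by
  intro t ht
  have hG0 : ∀ t, t₀ ≤ t → 0 ≤ ∫ s in t₀..t, ∑ k, |a k s| := fun t ht =>
    intervalIntegral.integral_nonneg ht fun s _ => sum_nonneg fun k _ => abs_nonneg _
  have hB0 : 0 ≤ B := le_trans (by have := hG0 T (ht.1.trans ht.2); positivity) hB
  set M := |x₀| + ∫ s in t₀..T, |∑ k, a k s * x (h k s)|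
  have hM : 0 ≤ M := add_nonneg (abs_nonneg _)
    (intervalIntegral.integral_nonneg (ht.1.trans ht.2) fun _ _ => abs_nonneg _)
  have hbound : ∀ n : ℕ, |x t| ≤ B * exp (∫ s in t₀..t, ∑ k, |a k s|) +
      M * ((∫ s in t₀..t, ∑ k, |a k s|) ^ n / n !) := fun n =>
    (abs_le_picardBound_of_eq_sub_integral hg hht hC hxC hxeq hB hM
      (abs_le_abs_add_integral_abs_of_eq_sub_integral hF hxeq) n t ht).trans
      (picardBound_le hB0 n (hG0 t ht.1))
  have hlim : Tendsto (fun n : ℕ => B * exp (∫ s in t₀..t, ∑ k, |a k s|) +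
      M * ((∫ s in t₀..t, ∑ k, |a k s|) ^ n / n !)) atTop
      (𝓝 (B * exp (∫ s in t₀..t, ∑ k, |a k s|))) := by
    simpa using
      tendsto_const_nhds.add ((FloorSemiring.tendsto_pow_div_factorial_atTop _).const_mul M)
  exact ge_of_tendsto' hlim hbound

end DelayEquation

theorem stmt5_general (m : ℕ) (a : Fin m → ℝ → ℝ) (h : Fin m → ℝ → ℝ)
    (hht : ∀ k t, h k t ≤ t)
    (hint : IntegrableOn (fun s => ∑ k : Fin m, |a k s|) (Set.Ici (0:ℝ)))
    (t₀ : ℝ) (ht₀ : 0 ≤ t₀) (x₀ : ℝ) (φ : ℝ → ℝ)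
    (C : ℝ) (hC : ∀ t < t₀, |φ t| ≤ C)
    (x : ℝ → ℝ)
    (hxφ : ∀ t < t₀, x t = φ t)
    (hxeq : ∀ t ≥ t₀, x t = x₀ - ∫ s in t₀..t, ∑ k : Fin m, a k s * x (h k s)) :
    ∀ t ≥ t₀, |x t| ≤
      Real.exp (∫ s in Set.Ici t₀, ∑ k : Fin m, |a k s|) *
        (|x₀| + C * ∫ s in Set.Ici t₀, ∑ k : Fin m, |a k s|) := by
  intro T hT
  have hC0 : 0 ≤ C := (abs_nonneg _).trans (hC (t₀ - 1) (by linarith))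
  have hxC : ∀ t < t₀, |x t| ≤ C := fun t ht => hxφ t ht ▸ hC t ht
  have hg0 : ∀ s, 0 ≤ ∑ k, |a k s| := fun s => sum_nonneg fun k _ => abs_nonneg _
  have hgI : IntegrableOn (fun s => ∑ k, |a k s|) (Ici t₀) :=
    hint.mono_set (Ici_subset_Ici.mpr ht₀)
  have hI0 : 0 ≤ ∫ s in Ici t₀, ∑ k, |a k s| :=
    setIntegral_nonneg measurableSet_Ici fun s _ => hg0 s
  have hB0 : 0 ≤ |x₀| + C * ∫ s in Ici t₀, ∑ k, |a k s| := by positivity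
  by_cases hF : IntervalIntegrable (fun s => ∑ k, a k s * x (h k s)) volume t₀ T
  · have hGI := intervalIntegral_le_setIntegral_Ici hT hgI hg0
    calc |x T| ≤ (|x₀| + C * ∫ s in Ici t₀, ∑ k, |a k s|) * exp (∫ s in t₀..T, ∑ k, |a k s|) :=
          abs_le_mul_exp_of_eq_sub_integral
            ((intervalIntegrable_iff_integrableOn_Ioc_of_le hT).mpr
              (hgI.mono_set fun _ hs => hs.1.le)) hF hht hC0 hxC
            (fun t ht => hxeq t ht.1) (by gcongr) T ⟨hT, le_rfl⟩
      _ ≤ _ := by rw [mul_comm]; exact mul_le_mul_of_nonneg_right (exp_le_exp.mpr hGI) hB0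
  · have hxT : x T = x₀ := by rw [hxeq T hT, intervalIntegral.integral_undef hF, sub_zero]
    rw [hxT]
    exact (le_add_of_nonneg_right (by positivity)).trans
      (le_mul_of_one_le_left hB0 (one_le_exp hI0))

/-- Theorem 4 (first part): if ∫_0^∞ Σ_k |a_k| < ∞ then every solution of
x'(t) + Σ_k a_k(t) x(h_k(t)) = 0 with bounded initial function φ on (-∞,t₀)
and x(t₀)=x₀ satisfies
|x(t)| ≤ exp(∫_{t₀}^∞ Σ_k |a_k|)(|x₀| + ‖φ‖ ∫_{t₀}^∞ Σ_k |a_k|). -/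
theorem stmt5 (m : ℕ) (a : Fin m → ℝ → ℝ) (h : Fin m → ℝ → ℝ)
    (hameas : ∀ k, Measurable (a k)) (habd : ∃ A : ℝ, ∀ k t, |a k t| ≤ A)
    (hh : ∀ k, Measurable (h k)) (hht : ∀ k t, h k t ≤ t)
    (hint : IntegrableOn (fun s => ∑ k : Fin m, |a k s|) (Set.Ici (0:ℝ)))
    (t₀ : ℝ) (ht₀ : 0 ≤ t₀) (x₀ : ℝ) (φ : ℝ → ℝ) (hφmeas : Measurable φ)
    (C : ℝ) (hC : ∀ t < t₀, |φ t| ≤ C)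
    (x : ℝ → ℝ)
    (hxφ : ∀ t < t₀, x t = φ t) (hx₀ : x t₀ = x₀)
    (hxeq : ∀ t ≥ t₀, x t = x₀ - ∫ s in t₀..t, ∑ k : Fin m, a k s * x (h k s)) :
    ∀ t ≥ t₀, |x t| ≤
      Real.exp (∫ s in Set.Ici t₀, ∑ k : Fin m, |a k s|) *
        (|x₀| + C * ∫ s in Set.Ici t₀, ∑ k : Fin m, |a k s|) :=
  stmt5_general m a h hht hint t₀ ht₀ x₀ φ C hC x hxφ hxeq
end

section
/- Suppose ∫_0^∞ Σ_{k=1}^m |a_k(s)| ds < ∞ and set A = exp(∫_0^∞ Σ_k |a_k(s)| ds). If t₀ ≥ 0 is chosen so that ∫_{t₀}^∞ Σ_k |a_k(s)| ds < 1/(2A), then the fundamental function satisfies X(t, t₀) ≥ 1/2 for all t ≥ t₀; in particular X(t,t₀) does not tend to 0, so the delay equation x'(t) + Σ_k a_k(t) x(h_k(t)) = 0 is not asymptotically stable. -/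
/-!
Gronwall along the delay equation: with `W t = ∫_{t₀}^t Σ_k |a_k|`, a continuous induction shows
`|X(t,t₀)| < c · exp (W t)` for every `c > 1`, the induction step being the identity
`∫_{t₀}^t Σ_k |a_k| · exp W = exp (W t) - 1`; hence `|X(t,t₀)| ≤ exp (W t) ≤ A`. Feeding this back
into the integrated equation gives `X(t,t₀) ≥ 1 - A ∫_{t₀}^∞ Σ_k |a_k| > 1/2`.
-/

open MeasureTheory Real Finset Filter

theorem LipschitzOnWith.comp_absolutelyContinuousOnInterval {E F : Type*} [PseudoMetricSpace E]
    [PseudoMetricSpace F] {f : ℝ → E} {g : E → F} {K : NNReal} {s : Set E} {a b : ℝ}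
    (hg : LipschitzOnWith K g s) (hf : AbsolutelyContinuousOnInterval f a b)
    (hfs : Set.MapsTo f (Set.uIcc a b) s) :
    AbsolutelyContinuousOnInterval (g ∘ f) a b := by
  unfold AbsolutelyContinuousOnInterval at *
  refine squeeze_zero' (Eventually.of_forall fun _ => Finset.sum_nonneg fun _ _ => dist_nonneg)
    ?_ (by simpa [Finset.mul_sum] using hf.const_mul (K : ℝ))
  filter_upwards [mem_inf_of_right (mem_principal_self _)] with I hI
  exact Finset.sum_le_sum fun i hi => hg.dist_le_mul _ (hfs (hI.1 i hi).1) _ (hfs (hI.1 i hi).2)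

theorem intervalIntegral.integral_mul_exp_integral {w : ℝ → ℝ} {a b : ℝ}
    (hw : IntervalIntegrable w volume a b) :
    ∫ x in a..b, w x * exp (∫ t in a..x, w t) = exp (∫ t in a..b, w t) - 1 := by
  have hW := hw.absolutelyContinuousOnInterval_intervalIntegral Set.left_mem_uIcc
  obtain ⟨C, hC⟩ := hW.exists_bound
  obtain ⟨K, hK⟩ := Real.contDiff_exp.contDiffOn.exists_lipschitzOnWith one_ne_zero
    (convex_closedBall 0 C) (isCompact_closedBall 0 C)
  have hexpW := hK.comp_absolutelyContinuousOnInterval hW fun x hx => by simpa using hC x hx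
  have hFTC := hexpW.integral_deriv_eq_sub
  simp only [Function.comp_apply, intervalIntegral.integral_same, exp_zero] at hFTC
  rw [← hFTC]
  refine intervalIntegral.integral_congr_ae ?_
  simp only [Function.comp_def]
  filter_upwards [hw.ae_hasDerivAt_integral] with x hx hxab
  rw [((hx (Set.uIoc_subset_uIcc hxab) a Set.left_mem_uIcc).exp).deriv, mul_comm]

theorem ContinuousOn.forall_lt_of_forall_Ico_lt {f g : ℝ → ℝ} {a b : ℝ}
    (hf : ContinuousOn f (Set.Icc a b)) (hg : ContinuousOn g (Set.Icc a b))
    (hstep : ∀ v ∈ Set.Icc a b, (∀ r ∈ Set.Ico a v, f r < g r) → f v < g v) :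
    ∀ v ∈ Set.Icc a b, f v < g v := by
  by_contra! hbad
  set T := {v ∈ Set.Icc a b | g v ≤ f v}
  have hT : IsCompact T := isCompact_Icc.of_isClosed_subset (isClosed_Icc.isClosed_le hg hf)
    fun _ hv => hv.1
  obtain ⟨v, ⟨hv, hgf⟩, hleast⟩ := hT.exists_isLeast hbad
  refine (hstep v hv fun r hr => ?_).not_ge hgf
  by_contra! hr'
  exact (hleast ⟨⟨hr.1, hr.2.le.trans hv.2⟩, hr'⟩).not_gt hr.2

section DelayEquation

variable {m : ℕ} {a h : Fin m → ℝ → ℝ} {x : ℝ → ℝ} {t₀ : ℝ}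

theorem abs_integral_delay_le (hht : ∀ k t, h k t ≤ t) (hx0 : ∀ r < t₀, x r = 0) {v : ℝ}
    (hv : t₀ ≤ v) (hw : IntervalIntegrable (fun s => ∑ k, |a k s|) volume t₀ v)
    {φ : ℝ → ℝ} (hφ : MonotoneOn φ (Set.Icc t₀ v)) (hφc : ContinuousOn φ (Set.Icc t₀ v))
    (hxφ : ∀ r ∈ Set.Ico t₀ v, |x r| ≤ φ r) :
    |∫ τ in t₀..v, ∑ k, a k τ * x (h k τ)| ≤ ∫ τ in t₀..v, (∑ k, |a k τ|) * φ τ := by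
  -- no integrability of the delay term is needed: otherwise its integral is `0`
  rw [← Real.norm_eq_abs]
  refine intervalIntegral.norm_integral_le_of_norm_le hv ?_
    (hw.mul_continuousOn (by rwa [Set.uIcc_of_le hv]))
  have hne : ∀ᵐ τ : ℝ, τ ≠ v := by simp [ae_iff, measure_singleton]
  filter_upwards [hne] with τ hτv hτ
  have hτ' : τ ∈ Set.Ioo t₀ v := ⟨hτ.1, lt_of_le_of_ne hτ.2 hτv⟩
  have hφτ : ∀ r ∈ Set.Icc t₀ τ, φ r ≤ φ τ := fun r hr =>
    hφ ⟨hr.1, hr.2.trans hτ.2⟩ ⟨hτ.1.le, hτ.2⟩ hr.2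
  rw [Real.norm_eq_abs, Finset.sum_mul]
  refine (Finset.abs_sum_le_sum_abs _ _).trans (Finset.sum_le_sum fun k _ => ?_)
  rw [abs_mul]
  refine mul_le_mul_of_nonneg_left ?_ (abs_nonneg _)
  rcases lt_or_ge (h k τ) t₀ with hlt | hge
  · rw [hx0 _ hlt, abs_zero]
    exact (abs_nonneg _).trans <| (hxφ t₀ ⟨le_rfl, hτ'.1.trans hτ'.2⟩).trans
      (hφτ t₀ ⟨le_rfl, hτ'.1.le⟩)
  · exact (hxφ _ ⟨hge, (hht k τ).trans_lt hτ'.2⟩).trans (hφτ _ ⟨hge, hht k τ⟩)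

theorem abs_le_exp_integral_of_delay (hht : ∀ k t, h k t ≤ t) (hx0 : ∀ r < t₀, x r = 0)
    (hxeq : ∀ t, t₀ ≤ t → x t = 1 - ∫ τ in t₀..t, ∑ k, a k τ * x (h k τ)) {t : ℝ}
    (ht : t₀ ≤ t) (hw : IntervalIntegrable (fun s => ∑ k, |a k s|) volume t₀ t) :
    |x t| ≤ exp (∫ s in t₀..t, ∑ k, |a k s|) := by
  set W := fun v => ∫ s in t₀..v, ∑ k, |a k s|
  have hw0 : ∀ s, 0 ≤ ∑ k, |a k s| := fun s => Finset.sum_nonneg fun k _ => abs_nonneg _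
  by_cases hf : IntervalIntegrable (fun τ => ∑ k, a k τ * x (h k τ)) volume t₀ t
  swap
  · -- the integral is then the junk value `0`, so `x t = 1`
    rw [hxeq t ht, intervalIntegral.integral_undef hf, sub_zero, abs_one]
    exact one_le_exp (intervalIntegral.integral_nonneg ht fun s _ => hw0 s)
  have hsub : ∀ v ∈ Set.Icc t₀ t, Set.uIcc t₀ v ⊆ Set.uIcc t₀ t := fun v hv =>
    Set.uIcc_subset_uIcc Set.left_mem_uIcc (by rwa [Set.uIcc_of_le ht])
  have hWmono : MonotoneOn W (Set.Icc t₀ t) := fun u hu v hv huv =>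
    intervalIntegral.integral_mono_interval le_rfl hu.1 huv (ae_of_all _ hw0)
      (hw.mono_set (hsub v hv))
  have hWc : ContinuousOn W (Set.Icc t₀ t) := by
    simpa [Set.uIcc_of_le ht] using
      intervalIntegral.continuousOn_primitive_interval' hw Set.left_mem_uIcc
  have hxc : ContinuousOn x (Set.Icc t₀ t) := by
    have := intervalIntegral.continuousOn_primitive_interval' hf Set.left_mem_uIcc
    rw [Set.uIcc_of_le ht] at this
    exact (continuousOn_const.sub this).congr fun v hv => hxeq v hv.1
  have hbound : ∀ c > 1, ∀ v ∈ Set.Icc t₀ t, |x v| < exp (W v) * c := fun c hc =>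
    hxc.abs.forall_lt_of_forall_Ico_lt (hWc.rexp.mul continuousOn_const) fun v hv hIH => by
      have hWv := abs_integral_delay_le hht hx0 hv.1 (hw.mono_set (hsub v hv))
        (φ := fun r => exp (W r) * c)
        (fun r hr s hs hrs => mul_le_mul_of_nonneg_right (exp_le_exp.2 <|
          hWmono ⟨hr.1, hr.2.trans hv.2⟩ ⟨hs.1, hs.2.trans hv.2⟩ hrs) (by linarith))
        ((hWc.rexp.mul continuousOn_const).mono fun r hr => ⟨hr.1, hr.2.trans hv.2⟩)
        fun r hr => (hIH r hr).le
      simp_rw [← mul_assoc] at hWv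
      rw [intervalIntegral.integral_mul_const, intervalIntegral.integral_mul_exp_integral
        (hw.mono_set (hsub v hv))] at hWv
      calc |x v| = |1 - ∫ τ in t₀..v, ∑ k, a k τ * x (h k τ)| := by rw [hxeq v hv.1]
        _ ≤ |1| + |∫ τ in t₀..v, ∑ k, a k τ * x (h k τ)| := abs_sub _ _
        _ < exp (W v) * c := by rw [abs_one]; linarith
  refine ge_of_tendsto (f := fun c => exp (W t) * c) (x := nhdsWithin 1 (Set.Ioi 1)) ?_ ?_
  · simpa using ((continuous_const_mul (exp (W t))).tendsto 1).mono_left nhdsWithin_le_nhds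
  · filter_upwards [self_mem_nhdsWithin] with c hc
    exact (hbound c hc t ⟨ht, le_rfl⟩).le

end DelayEquation

theorem intervalIntegral_le_setIntegral_Ici_s6 {w : ℝ → ℝ} {c a b : ℝ}
    (hw : IntegrableOn w (Set.Ici c)) (hw0 : ∀ s ≥ c, 0 ≤ w s) (hca : c ≤ a) (hab : a ≤ b) :
    ∫ s in a..b, w s ≤ ∫ s in Set.Ici c, w s := by
  rw [intervalIntegral.integral_of_le hab]
  exact setIntegral_mono_set hw (ae_restrict_of_forall_mem measurableSet_Ici hw0)
    (show Set.Ioc a b ⊆ Set.Ici c from fun s hs => hca.trans hs.1.le).eventuallyLE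

theorem stmt6_general (m : ℕ) (a : Fin m → ℝ → ℝ) (h : Fin m → ℝ → ℝ) (X : ℝ → ℝ → ℝ)
    (hht : ∀ k t, h k t ≤ t)
    (hint : IntegrableOn (fun s => ∑ k : Fin m, |a k s|) (Set.Ici (0:ℝ)))
    (hX0 : ∀ s t : ℝ, 0 ≤ s → t < s → X t s = 0)
    (hXeq : ∀ s t : ℝ, 0 ≤ s → s ≤ t →
      X t s = 1 - ∫ τ in s..t, ∑ k : Fin m, a k τ * X (h k τ) s)
    (A : ℝ) (hA : A = Real.exp (∫ s in Set.Ici (0:ℝ), ∑ k : Fin m, |a k s|))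
    (t₀ : ℝ) (ht₀ : 0 ≤ t₀)
    (ht₀small : (∫ s in Set.Ici t₀, ∑ k : Fin m, |a k s|) < 1 / (2 * A)) :
    (∀ t ≥ t₀, (1:ℝ)/2 ≤ X t t₀) ∧
      ¬ Filter.Tendsto (fun t => X t t₀) Filter.atTop (nhds 0) := by
  have hw0 : ∀ s, 0 ≤ ∑ k, |a k s| := fun s => Finset.sum_nonneg fun k _ => abs_nonneg _
  have hw : ∀ t ≥ t₀, IntervalIntegrable (fun s => ∑ k, |a k s|) volume t₀ t := fun t ht =>
    (hint.mono_set fun s hs => ht₀.trans (Set.uIcc_of_le ht ▸ hs).1).intervalIntegrable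
  have hx0 : ∀ r < t₀, X r t₀ = 0 := fun r hr => hX0 t₀ r ht₀ hr
  have hxA : ∀ r ≥ t₀, |X r t₀| ≤ A := fun r hr =>
    (abs_le_exp_integral_of_delay hht hx0 (hXeq t₀ · ht₀) hr (hw r hr)).trans <| hA ▸
      exp_le_exp.2 (intervalIntegral_le_setIntegral_Ici_s6 hint (fun s _ => hw0 s) ht₀ hr)
  have hA0 : 0 < A := hA ▸ exp_pos _
  have hAε : A * ∫ s in Set.Ici t₀, ∑ k, |a k s| < 1 / 2 := by
    rw [lt_div_iff₀ (by positivity)] at ht₀small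
    linarith
  have hlower : ∀ t ≥ t₀, (1:ℝ)/2 ≤ X t t₀ := fun t ht => by
    have hI := abs_integral_delay_le hht hx0 ht (hw t ht) (φ := fun _ => A) monotoneOn_const
      continuousOn_const fun r hr => hxA r hr.1
    have hε := intervalIntegral_le_setIntegral_Ici_s6
      (hint.mono_set (Set.Ici_subset_Ici.2 ht₀)) (fun s _ => hw0 s) le_rfl ht
    rw [intervalIntegral.integral_mul_const] at hI
    rw [hXeq t₀ t ht₀ ht]
    nlinarith [le_abs_self (∫ τ in t₀..t, ∑ k, a k τ * X (h k τ) t₀)]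
  exact ⟨hlower, fun hlim =>
    absurd (ge_of_tendsto hlim (eventually_atTop.2 ⟨t₀, hlower⟩)) (by norm_num)⟩

/-- Theorem 4 (second part): if ∫_0^∞ Σ_k |a_k| < ∞, A = exp(∫_0^∞ Σ_k |a_k|),
and t₀ ≥ 0 is such that ∫_{t₀}^∞ Σ_k |a_k| < 1/(2A), then the fundamental
function satisfies X(t,t₀) ≥ 1/2 for all t ≥ t₀; in particular X(·,t₀) does
not tend to 0, so the equation is not asymptotically stable. -/
theorem stmt6 (m : ℕ) (a : Fin m → ℝ → ℝ) (h : Fin m → ℝ → ℝ) (X : ℝ → ℝ → ℝ)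
    (hameas : ∀ k, Measurable (a k)) (habd : ∃ A : ℝ, ∀ k t, |a k t| ≤ A)
    (hh : ∀ k, Measurable (h k)) (hht : ∀ k t, h k t ≤ t)
    (hint : IntegrableOn (fun s => ∑ k : Fin m, |a k s|) (Set.Ici (0:ℝ)))
    (hX0 : ∀ s t : ℝ, 0 ≤ s → t < s → X t s = 0)
    (hX1 : ∀ s : ℝ, 0 ≤ s → X s s = 1)
    (hXeq : ∀ s t : ℝ, 0 ≤ s → s ≤ t →
      X t s = 1 - ∫ τ in s..t, ∑ k : Fin m, a k τ * X (h k τ) s)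
    (A : ℝ) (hA : A = Real.exp (∫ s in Set.Ici (0:ℝ), ∑ k : Fin m, |a k s|))
    (t₀ : ℝ) (ht₀ : 0 ≤ t₀)
    (ht₀small : (∫ s in Set.Ici t₀, ∑ k : Fin m, |a k s|) < 1 / (2 * A)) :
    (∀ t ≥ t₀, (1:ℝ)/2 ≤ X t t₀) ∧
      ¬ Filter.Tendsto (fun t => X t t₀) Filter.atTop (nhds 0) :=
  stmt6_general m a h X hht hint hX0 hXeq A hA t₀ ht₀ ht₀small
end

section
/- Let a_k(t) ≥ 0 be measurable essentially bounded functions and h_k(t) ≤ t measurable delays with limsup_{t→∞}(t - h_k(t)) < ∞. If the delay equation x'(t) + Σ_{k=1}^m a_k(t) x(h_k(t)) = 0 is asymptotically stable, then ∫_0^∞ Σ_{k=1}^m a_k(s) ds = ∞, and consequently the ordinary differential equation x'(t) + (Σ_{k=1}^m a_k(t)) x(t) = 0 is asymptotically stable. -/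
open MeasureTheory Real Finset Filter

/-!
If `∫₀^∞ Σₖ aₖ` were finite, pick `t₀` with `∫_{t₀}^t Σₖ aₖ ≤ 1/4` for all `t ≥ t₀`. Since the
delays only look into the past and `X · t₀` vanishes before `t₀`, a bound `|X u t₀| ≤ M` on
`[t₀, t]` gives `|∫_{t₀}^t Σₖ aₖ X(hₖ τ, t₀) dτ| ≤ M/4`. Applied at a maximum point of `|X · t₀|`
this yields `|X t t₀| ≤ 4/3`, and then `X t t₀ ≥ 1 - 1/3` for all `t ≥ t₀`, contradicting
`X t t₀ → 0`. Once `∫₀^∞ Σₖ aₖ = ∞`, the solutions `x₀ exp(-∫_{t₀}^t Σₖ aₖ)` of the ODE tend to `0`.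
-/

theorem exists_intervalIntegral_le_of_integrableOn_Ici {f : ℝ → ℝ} {a ε : ℝ} (hf₀ : 0 ≤ f)
    (hf : IntegrableOn f (Set.Ici a)) (hε : 0 < ε) :
    ∃ t₀, a ≤ t₀ ∧ ∀ t, t₀ ≤ t → ∫ x in t₀..t, f x ≤ ε := by
  obtain ⟨t₀, hat₀, htail⟩ := ((eventually_ge_atTop a).and
    ((tendsto_integral_Ioi_zero (f := f) (μ := volume) tendsto_id).eventually
      (gt_mem_nhds hε))).exists
  refine ⟨t₀, hat₀, fun t ht => ?_⟩
  calc ∫ x in t₀..t, f x = ∫ x in Set.Ioc t₀ t, f x := intervalIntegral.integral_of_le ht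
    _ ≤ ∫ x in Set.Ioi t₀, f x :=
      setIntegral_mono_set (hf.mono_set fun x hx => hat₀.trans hx.le)
        (ae_of_all _ hf₀) Set.Ioc_subset_Ioi_self.eventuallyLE
    _ ≤ ε := htail.le

theorem tendsto_intervalIntegral_atTop_of_not_integrableAtFilter {f : ℝ → ℝ} (hf₀ : 0 ≤ f)
    (hf : LocallyIntegrable f) (hnot : ¬ IntegrableAtFilter f atTop) (b : ℝ) :
    Tendsto (fun t => ∫ x in b..t, f x) atTop atTop := by
  have hfi (p q : ℝ) : IntervalIntegrable f volume p q :=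
    (hf.integrableOn_isCompact isCompact_uIcc).intervalIntegrable
  refine tendsto_atTop_atTop_of_monotone (fun p q hpq => ?_) fun c => ?_
  · rw [← intervalIntegral.integral_add_adjacent_intervals (hfi b p) (hfi p q)]
    exact le_add_of_nonneg_right (intervalIntegral.integral_nonneg hpq fun x _ => hf₀ x)
  · by_contra! hbdd
    refine hnot ⟨Set.Ioi b, Ioi_mem_atTop b, ?_⟩
    refine integrableOn_Ioi_of_intervalIntegral_norm_bounded c b (fun i => (hfi b i).1)
      tendsto_id (Eventually.of_forall fun t => ?_)
    simp only [Real.norm_of_nonneg (hf₀ _)]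
    exact (hbdd t).le

section Volterra

variable {f G F : ℝ → ℝ} {t₀ t ε M : ℝ}

theorem abs_intervalIntegral_le_mul_of_abs_le_mul (hM : 0 ≤ M) (hε : 0 ≤ ε) (ht : t₀ ≤ t)
    (hFi : IntervalIntegrable F volume t₀ t) (hF : ∫ τ in t₀..t, F τ ≤ ε)
    (hG : ∀ τ ∈ Set.Icc t₀ t, |G τ| ≤ M * F τ) :
    |∫ τ in t₀..t, G τ| ≤ M * ε := by
  by_cases hGi : IntervalIntegrable G volume t₀ t
  · calc |∫ τ in t₀..t, G τ| ≤ ∫ τ in t₀..t, |G τ| :=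
          intervalIntegral.abs_integral_le_integral_abs ht
      _ ≤ ∫ τ in t₀..t, M * F τ :=
          intervalIntegral.integral_mono_on ht hGi.abs (hFi.const_mul M) hG
      _ = M * ∫ τ in t₀..t, F τ := intervalIntegral.integral_const_mul _ _
      _ ≤ M * ε := mul_le_mul_of_nonneg_left hF hM
  · rw [intervalIntegral.integral_undef hGi, abs_zero]
    positivity

theorem abs_le_inv_one_sub_of_eq_one_sub_intervalIntegral
    (hf : ∀ t, t₀ ≤ t → f t = 1 - ∫ τ in t₀..t, G τ)
    (hG : ∀ M t, (∀ u ∈ Set.Icc t₀ t, |f u| ≤ M) → ∀ τ ∈ Set.Icc t₀ t, |G τ| ≤ M * F τ)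
    (hFi : ∀ t, IntervalIntegrable F volume t₀ t) (hF : ∀ t, t₀ ≤ t → ∫ τ in t₀..t, F τ ≤ ε)
    (hε : ε < 1) (ht : t₀ ≤ t) :
    |f t| ≤ (1 - ε)⁻¹ := by
  have hε₀ : 0 ≤ ε := by simpa using hF t₀ le_rfl
  have hone : 1 ≤ (1 - ε)⁻¹ := one_le_inv₀ (by linarith) |>.2 (by linarith)
  by_contra! hlarge
  -- `f t ≠ 1` rules out the junk value `∫ G = 0` of a non-integrable `G`.
  have hGi : IntervalIntegrable G volume t₀ t := by
    by_contra hGi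
    rw [hf t ht, intervalIntegral.integral_undef hGi, sub_zero, abs_one] at hlarge
    linarith
  have hcont : ContinuousOn f (Set.Icc t₀ t) := by
    have hprim := intervalIntegral.continuousOn_primitive_interval (μ := volume)
      (Set.uIcc_of_le ht ▸ (intervalIntegrable_iff_integrableOn_Icc_of_le ht).1 hGi)
    rw [Set.uIcc_of_le ht] at hprim
    exact (continuousOn_const.sub hprim).congr fun u hu => hf u hu.1
  obtain ⟨s, hs, hsmax⟩ :=
    isCompact_Icc.exists_isMaxOn (Set.nonempty_Icc.2 ht) hcont.abs
  have hbound : ∀ u ∈ Set.Icc t₀ s, |f u| ≤ |f s| :=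
    fun u hu => hsmax ⟨hu.1, hu.2.trans hs.2⟩
  have hfs : |f s| ≤ 1 + |f s| * ε := by
    calc |f s| = |1 - ∫ τ in t₀..s, G τ| := by rw [hf s hs.1]
      _ ≤ |1| + |∫ τ in t₀..s, G τ| := abs_sub _ _
      _ ≤ 1 + |f s| * ε := by
        rw [abs_one]
        exact add_le_add_right (abs_intervalIntegral_le_mul_of_abs_le_mul (abs_nonneg _) hε₀
          hs.1 (hFi s) (hF s hs.1) (hG _ s hbound)) 1
  have hfs' : |f s| ≤ (1 - ε)⁻¹ := by
    rw [inv_eq_one_div, le_div_iff₀ (by linarith)]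
    linarith
  have hts : |f t| ≤ |f s| := hsmax ⟨ht, le_rfl⟩
  linarith

theorem one_sub_mul_inv_one_sub_le_of_eq_one_sub_intervalIntegral
    (hf : ∀ t, t₀ ≤ t → f t = 1 - ∫ τ in t₀..t, G τ)
    (hG : ∀ M t, (∀ u ∈ Set.Icc t₀ t, |f u| ≤ M) → ∀ τ ∈ Set.Icc t₀ t, |G τ| ≤ M * F τ)
    (hFi : ∀ t, IntervalIntegrable F volume t₀ t) (hF : ∀ t, t₀ ≤ t → ∫ τ in t₀..t, F τ ≤ ε)
    (hε : ε < 1) (ht : t₀ ≤ t) :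
    1 - (1 - ε)⁻¹ * ε ≤ f t := by
  have hε₀ : 0 ≤ ε := by simpa using hF t₀ le_rfl
  have hint := abs_intervalIntegral_le_mul_of_abs_le_mul (by rw [inv_nonneg]; linarith) hε₀ ht
    (hFi t) (hF t ht) (hG _ t fun u hu =>
      abs_le_inv_one_sub_of_eq_one_sub_intervalIntegral hf hG hFi hF hε hu.1)
  rw [hf t ht]
  linarith [le_abs_self (∫ τ in t₀..t, G τ)]

end Volterra

theorem abs_sum_mul_comp_delay_le {ι : Type*} [Fintype ι] {a h : ι → ℝ → ℝ} {x : ℝ → ℝ}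
    {t₀ t τ M : ℝ} (ha : ∀ k t, 0 ≤ a k t) (hh : ∀ k t, h k t ≤ t)
    (hx : ∀ t, t < t₀ → x t = 0) (hM : ∀ u ∈ Set.Icc t₀ t, |x u| ≤ M) (hτ : τ ∈ Set.Icc t₀ t) :
    |∑ k, a k τ * x (h k τ)| ≤ M * ∑ k, a k τ := by
  have hM₀ : 0 ≤ M := (abs_nonneg _).trans (hM t₀ ⟨le_rfl, hτ.1.trans hτ.2⟩)
  have hxM (k : ι) : |x (h k τ)| ≤ M := by
    rcases lt_or_ge (h k τ) t₀ with hlt | hge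
    · rwa [hx _ hlt, abs_zero]
    · exact hM _ ⟨hge, (hh k τ).trans hτ.2⟩
  calc |∑ k, a k τ * x (h k τ)| ≤ ∑ k, |a k τ * x (h k τ)| := abs_sum_le_sum_abs _ _
    _ ≤ ∑ k, a k τ * M := sum_le_sum fun k _ => by
        rw [abs_mul, abs_of_nonneg (ha k τ)]
        exact mul_le_mul_of_nonneg_left (hxM k) (ha k τ)
    _ = M * ∑ k, a k τ := by rw [← sum_mul, mul_comm]

theorem stmt7_general (m : ℕ) (a : Fin m → ℝ → ℝ) (h : Fin m → ℝ → ℝ) (X : ℝ → ℝ → ℝ)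
    (hameas : ∀ k, Measurable (a k)) (habd : ∃ A : ℝ, ∀ k t, |a k t| ≤ A)
    (hapos : ∀ k t, 0 ≤ a k t)
    (hht : ∀ k t, h k t ≤ t)
    (hX0 : ∀ s t : ℝ, 0 ≤ s → t < s → X t s = 0)
    (hXeq : ∀ s t : ℝ, 0 ≤ s → s ≤ t →
      X t s = 1 - ∫ τ in s..t, ∑ k : Fin m, a k τ * X (h k τ) s)
    (hstab : ∀ t₀ : ℝ, 0 ≤ t₀ →
      Filter.Tendsto (fun t => X t t₀) Filter.atTop (nhds 0)) :
    ¬ IntegrableOn (fun s => ∑ k : Fin m, a k s) (Set.Ici (0:ℝ)) ∧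
      (∀ t₀ : ℝ, 0 ≤ t₀ → ∀ x₀ : ℝ,
        Filter.Tendsto (fun t => x₀ * Real.exp (-∫ s in t₀..t, ∑ k : Fin m, a k s))
          Filter.atTop (nhds 0)) := by
  obtain ⟨A, hA⟩ := habd
  set F : ℝ → ℝ := fun s => ∑ k : Fin m, a k s
  have hF₀ : 0 ≤ F := fun s => sum_nonneg fun k _ => hapos k s
  have hFloc : LocallyIntegrable F := locallyIntegrable_finsetSum _ fun k _ =>
    (memLp_top_of_bound (hameas k).aestronglyMeasurable A
      (ae_of_all _ fun t => hA k t)).locallyIntegrable le_top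
  have hnot : ¬ IntegrableOn F (Set.Ici 0) := by
    intro hint
    obtain ⟨t₀, ht₀, htail⟩ := exists_intervalIntegral_le_of_integrableOn_Ici hF₀ hint
      (by norm_num : (0 : ℝ) < 1 / 4)
    have hlow : ∀ t, t₀ ≤ t → 1 - (1 - 1 / 4)⁻¹ * (1 / 4) ≤ X t t₀ := fun t =>
      one_sub_mul_inv_one_sub_le_of_eq_one_sub_intervalIntegral (hXeq t₀ · ht₀)
        (fun M t hM τ hτ => abs_sum_mul_comp_delay_le hapos hht (hX0 t₀ · ht₀) hM hτ)
        (fun t => (hFloc.integrableOn_isCompact isCompact_uIcc).intervalIntegrable) htail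
        (by norm_num)
    have := ge_of_tendsto (hstab t₀ ht₀) (eventually_atTop.2 ⟨t₀, hlow⟩)
    norm_num at this
  refine ⟨hnot, fun t₀ _ x₀ => ?_⟩
  have hdiv := tendsto_intervalIntegral_atTop_of_not_integrableAtFilter hF₀ hFloc
    (fun hat => hnot (integrableOn_Ici_iff_integrableAtFilter_atTop.2
      ⟨hat, hFloc.locallyIntegrableOn _⟩)) t₀
  simpa using (tendsto_exp_neg_atTop_nhds_zero.comp hdiv).const_mul x₀

/-- Theorem 5 (first part): for nonnegative coefficients and bounded delays,
asymptotic stability of the delay equation (in particular, its fundamental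
function tends to 0) implies ∫_0^∞ Σ_k a_k = ∞ and hence asymptotic stability
of the ODE x' + (Σ_k a_k) x = 0, whose solutions are x₀ exp(-∫_{t₀}^t Σ_k a_k). -/
theorem stmt7 (m : ℕ) (a : Fin m → ℝ → ℝ) (h : Fin m → ℝ → ℝ) (X : ℝ → ℝ → ℝ)
    (hameas : ∀ k, Measurable (a k)) (habd : ∃ A : ℝ, ∀ k t, |a k t| ≤ A)
    (hapos : ∀ k t, 0 ≤ a k t)
    (hh : ∀ k, Measurable (h k)) (hht : ∀ k t, h k t ≤ t)
    (hdel : ∃ C : ℝ, ∀ k t, t - h k t ≤ C)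
    (hX0 : ∀ s t : ℝ, 0 ≤ s → t < s → X t s = 0)
    (hX1 : ∀ s : ℝ, 0 ≤ s → X s s = 1)
    (hXeq : ∀ s t : ℝ, 0 ≤ s → s ≤ t →
      X t s = 1 - ∫ τ in s..t, ∑ k : Fin m, a k τ * X (h k τ) s)
    (hstab : ∀ t₀ : ℝ, 0 ≤ t₀ →
      Filter.Tendsto (fun t => X t t₀) Filter.atTop (nhds 0)) :
    ¬ IntegrableOn (fun s => ∑ k : Fin m, a k s) (Set.Ici (0:ℝ)) ∧
      (∀ t₀ : ℝ, 0 ≤ t₀ → ∀ x₀ : ℝ,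
        Filter.Tendsto (fun t => x₀ * Real.exp (-∫ s in t₀..t, ∑ k : Fin m, a k s))
          Filter.atTop (nhds 0)) :=
  stmt7_general m a h X hameas habd hapos hht hX0 hXeq hstab
end

section
/- Let a_k(t) ≥ 0 be measurable essentially bounded functions and h_k(t) ≤ t measurable delays with t - h_k(t) ≤ n₀ for all k and t. Suppose the fundamental function satisfies |X(t,s)| ≤ K e^{-λ(t-s)} for some K, λ > 0 and all t ≥ s ≥ 0. Then there exists R > 0 such that liminf_{t→∞} ∫_t^{t+R} Σ_{k=1}^m a_k(τ) dτ > 0. -/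
/-!
Choose `R` with `K e^{-λR} ≤ 1/2`. Since `X(·, s)` vanishes before `s` and is at most `K`
after it, the integral equation gives `X(t + R, t) ≥ 1 - K ∫_t^{t+R} Σ_k a_k`, whereas the
exponential estimate gives `X(t + R, t) ≤ 1/2`. Hence `∫_t^{t+R} Σ_k a_k ≥ 1/(2K)` for every
`t ≥ 0`; these integrals are bounded above because the `a_k` are, so their liminf is at least
`1/(2K)`.
-/

open MeasureTheory Real Finset Filter

open Topology in
theorem exists_pos_mul_exp_neg_le (K : ℝ) {l ε : ℝ} (hl : 0 < l) (hε : 0 < ε) :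
    ∃ R > 0, K * exp (-l * R) ≤ ε := by
  have hlim : Tendsto (fun R => K * exp (-l * R)) atTop (𝓝 0) := by
    simpa [neg_mul] using
      (tendsto_exp_neg_atTop_nhds_zero.comp (tendsto_id.const_mul_atTop hl)).const_mul K
  obtain ⟨R, hR_le, hR_pos⟩ :=
    ((hlim.eventually (ge_mem_nhds hε)).and (eventually_gt_atTop 0)).exists
  exact ⟨R, hR_pos, hR_le⟩

theorem le_of_eq_zero_of_abs_le_mul_exp {x : ℝ → ℝ} {K l s : ℝ} (hK : 0 ≤ K)
    (hl : 0 ≤ l) (hx0 : ∀ t < s, x t = 0)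
    (hexp : ∀ t, s ≤ t → |x t| ≤ K * exp (-l * (t - s))) (t : ℝ) :
    x t ≤ K := by
  rcases lt_or_ge t s with hts | hst
  · rw [hx0 t hts]; exact hK
  · calc x t ≤ |x t| := le_abs_self _
      _ ≤ K * exp (-l * (t - s)) := hexp t hst
      _ ≤ K * 1 := by gcongr; exact exp_le_one_iff.2 (by nlinarith)
      _ = K := mul_one K

theorem integral_sum_mul_le {ι : Type*} [Fintype ι] {a g : ι → ℝ → ℝ} {K s t : ℝ}
    (hst : s ≤ t) (hK : 0 ≤ K) (ha : ∀ k τ, 0 ≤ a k τ) (hg : ∀ k τ, g k τ ≤ K)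
    (hint : IntervalIntegrable (fun τ => ∑ k, a k τ) volume s t) :
    ∫ τ in s..t, ∑ k, a k τ * g k τ ≤ K * ∫ τ in s..t, ∑ k, a k τ := by
  have hpt : ∀ τ, ∑ k, a k τ * g k τ ≤ K * ∑ k, a k τ := fun τ => by
    rw [mul_sum]
    exact sum_le_sum fun k _ => by
      rw [mul_comm K]
      exact mul_le_mul_of_nonneg_left (hg k τ) (ha k τ)
  by_cases hF : IntervalIntegrable (fun τ => ∑ k, a k τ * g k τ) volume s t
  · rw [← intervalIntegral.integral_const_mul]
    exact intervalIntegral.integral_mono_on hst hF (hint.const_mul K) fun τ _ => hpt τ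
  · rw [intervalIntegral.integral_undef hF]
    exact mul_nonneg hK <|
      intervalIntegral.integral_nonneg hst fun τ _ => sum_nonneg fun k _ => ha k τ

theorem liminf_integral_pos {f : ℝ → ℝ} {R c B : ℝ} (hR : 0 ≤ R) (hc : 0 < c)
    (hf : ∀ τ, ‖f τ‖ ≤ B) (hlower : ∀ t ≥ 0, c ≤ ∫ τ in t..(t + R), f τ) :
    0 < liminf (fun t => ∫ τ in t..(t + R), f τ) atTop := by
  have hupper : ∀ t, ∫ τ in t..(t + R), f τ ≤ B * R := fun t => by
    have := intervalIntegral.norm_integral_le_of_norm_le_const (a := t) (b := t + R)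
      fun τ _ => hf τ
    rw [add_sub_cancel_left, abs_of_nonneg hR] at this
    exact (le_abs_self _).trans this
  exact hc.trans_le <| le_liminf_of_le (isCoboundedUnder_ge_of_le atTop hupper)
    ((eventually_ge_atTop 0).mono hlower)

theorem stmt8_general (m : ℕ) (a : Fin m → ℝ → ℝ) (h : Fin m → ℝ → ℝ) (X : ℝ → ℝ → ℝ)
    (hameas : ∀ k, Measurable (a k)) (habd : ∃ A : ℝ, ∀ k t, |a k t| ≤ A)
    (hapos : ∀ k t, 0 ≤ a k t)
    (hX0 : ∀ s t : ℝ, 0 ≤ s → t < s → X t s = 0)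
    (hXeq : ∀ s t : ℝ, 0 ≤ s → s ≤ t →
      X t s = 1 - ∫ τ in s..t, ∑ k : Fin m, a k τ * X (h k τ) s)
    (K l : ℝ) (hK : 0 < K) (hl : 0 < l)
    (hexp : ∀ s t : ℝ, 0 ≤ s → s ≤ t → |X t s| ≤ K * Real.exp (-l * (t - s))) :
    ∃ R > (0:ℝ),
      0 < Filter.liminf (fun t => ∫ τ in t..(t + R), ∑ k : Fin m, a k τ)
        Filter.atTop := by
  obtain ⟨A, hA⟩ := habd
  set S : ℝ → ℝ := fun τ => ∑ k : Fin m, a k τ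
  have hS_norm : ∀ τ, ‖S τ‖ ≤ m * A := fun τ => by
    rw [Real.norm_of_nonneg (sum_nonneg fun k _ => hapos k τ)]
    simpa using sum_le_card_nsmul univ (fun k => a k τ) A fun k _ => (abs_le.1 (hA k τ)).2
  have hS_int : ∀ s t, IntervalIntegrable S volume s t := fun s t =>
    intervalIntegrable_const.mono_fun'
      (Finset.measurable_sum _ fun k _ => hameas k).aestronglyMeasurable
      (ae_of_all _ hS_norm)
  obtain ⟨R, hR, hKR⟩ := exists_pos_mul_exp_neg_le K hl one_half_pos
  have hlower : ∀ t ≥ 0, 1 / (2 * K) ≤ ∫ τ in t..(t + R), S τ := fun t ht => by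
    have htR : t ≤ t + R := by linarith
    have hX_le : X (t + R) t ≤ 1 / 2 := by
      have := hexp t (t + R) ht htR
      rw [add_sub_cancel_left] at this
      linarith [le_abs_self (X (t + R) t)]
    have hX_ge : 1 - K * ∫ τ in t..(t + R), S τ ≤ X (t + R) t := by
      rw [hXeq t (t + R) ht htR]
      exact sub_le_sub_left (integral_sum_mul_le htR hK.le hapos
        (fun k τ => le_of_eq_zero_of_abs_le_mul_exp hK.le hl.le (fun τ => hX0 t τ ht)
          (fun τ => hexp t τ ht) (h k τ)) (hS_int _ _)) 1
    rw [div_le_iff₀ (by positivity)]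
    linarith
  exact ⟨R, hR, liminf_integral_pos hR.le (by positivity) hS_norm hlower⟩

/-- Theorem 5 (second part): nonnegative bounded coefficients, delays bounded by
n₀, and an exponential estimate |X(t,s)| ≤ K e^{-λ(t-s)} for the fundamental
function imply liminf_{t→∞} ∫_t^{t+R} Σ_k a_k > 0 for some R > 0. -/
theorem stmt8 (m : ℕ) (a : Fin m → ℝ → ℝ) (h : Fin m → ℝ → ℝ) (X : ℝ → ℝ → ℝ)
    (hameas : ∀ k, Measurable (a k)) (habd : ∃ A : ℝ, ∀ k t, |a k t| ≤ A)
    (hapos : ∀ k t, 0 ≤ a k t)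
    (hh : ∀ k, Measurable (h k)) (hht : ∀ k t, h k t ≤ t)
    (n₀ : ℝ) (hdel : ∀ k t, t - h k t ≤ n₀)
    (hX0 : ∀ s t : ℝ, 0 ≤ s → t < s → X t s = 0)
    (hX1 : ∀ s : ℝ, 0 ≤ s → X s s = 1)
    (hXeq : ∀ s t : ℝ, 0 ≤ s → s ≤ t →
      X t s = 1 - ∫ τ in s..t, ∑ k : Fin m, a k τ * X (h k τ) s)
    (K l : ℝ) (hK : 0 < K) (hl : 0 < l)
    (hexp : ∀ s t : ℝ, 0 ≤ s → s ≤ t → |X t s| ≤ K * Real.exp (-l * (t - s))) :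
    ∃ R > (0:ℝ),
      0 < Filter.liminf (fun t => ∫ τ in t..(t + R), ∑ k : Fin m, a k τ)
        Filter.atTop :=
  stmt8_general m a h X hameas habd hapos hX0 hXeq K l hK hl hexp
end
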